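/- Let A be a (possibly noncommutative) unital ring. For u = 1, 2 let R_u = D_u + C_u·(1_{N_u} − Σ_{k=1}^m X_k (A_u)_k)^{-1}·(Σ_{k=1}^m X_k (B_u)_k) be realizations, with matrices over A of compatible sizes (R_1 of size p×q, R_2 of size q×r), viewed as matrices over the ring of formal power series in m commuting variables X_1, …, X_m over A. Then the product R_1·R_2 admits the realization R_1 R_2 = D + C·(1_{N_1+N_2} − Σ_{k=1}^m X_k A_k)^{-1}·(Σ_{k=1}^m X_k B_k) with the block matrices A_k = [[ (A_1)_k , (B_1)_k C_2 ], [ 0 , (A_2)_k ]], B_k = [ (B_1)_k D_2 ; (B_2)_k ], C = [ C_1 , D_1 C_2 ], D = D_1 D_2. -/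

import Mathlib

/-!
With `Fᵤ = 1 − ∑ₖ Xₖ (Aᵤ)ₖ` and `Gᵤ = ∑ₖ Xₖ (Bᵤ)ₖ`, the pencil of the product is the block upper
triangular matrix `[[F₁, −G₁ C₂], [0, F₂]]`, with inverse `[[F₁⁻¹, F₁⁻¹ G₁ C₂ F₂⁻¹], [0, F₂⁻¹]]`.
Multiplying out, `C (1 − ∑ₖ Xₖ Aₖ)⁻¹ B = C₁ F₁⁻¹ G₁ D₂ + C₁ F₁⁻¹ G₁ C₂ F₂⁻¹ G₂ + D₁ C₂ F₂⁻¹ G₂`,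
which are the cross terms of `(D₁ + C₁ F₁⁻¹ G₁) (D₂ + C₂ F₂⁻¹ G₂)`. This identity holds in any
ring as soon as `F₁` and `F₂` are invertible; over power series they are, because their constant
coefficient is `1`.
-/

/-- Entrywise embedding of a constant matrix over `A` into matrices over the ring of
formal power series in `m` commuting variables over `A`. -/
noncomputable def matC {A : Type*} [Ring A] (m : ℕ) {κ ι : Type*} (M : Matrix κ ι A) :
    Matrix κ ι (MvPowerSeries (Fin m) A) :=
  M.map (MvPowerSeries.C (σ := Fin m) (R := A))

/-- `X_k · M`, the constant matrix `M` multiplied by the `k`-th formal variable. -/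
noncomputable def xMul {A : Type*} [Ring A] {m : ℕ} (k : Fin m) {κ ι : Type*}
    (M : Matrix κ ι A) : Matrix κ ι (MvPowerSeries (Fin m) A) :=
  (MvPowerSeries.X k : MvPowerSeries (Fin m) A) • matC m M

/-- The realization `D + C (1 − ∑_k X_k A_k)⁻¹ (∑_k X_k B_k)`, as a matrix of
formal power series in `m` commuting variables over `A`. -/
noncomputable def realization {A : Type*} [Ring A] (m : ℕ) {N p q : Type*}
    [Fintype N] [DecidableEq N]
    (Ak : Fin m → Matrix N N A) (Bk : Fin m → Matrix N q A)
    (C : Matrix p N A) (D : Matrix p q A) : Matrix p q (MvPowerSeries (Fin m) A) :=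
  matC m D + matC m C *
    Ring.inverse ((1 : Matrix N N (MvPowerSeries (Fin m) A)) - ∑ k, xMul k (Ak k)) *
    (∑ k, xMul k (Bk k))

open Matrix

section BlockInverse

variable {α : Type*} [Ring α] {m n : Type*} [Fintype m] [Fintype n] [DecidableEq m]
  [DecidableEq n]

theorem Matrix.ringInverse_fromBlocks_zero₂₁ {A : Matrix m m α} (B : Matrix m n α)
    {D : Matrix n n α} (hA : IsUnit A) (hD : IsUnit D) :
    Ring.inverse (fromBlocks A B 0 D) =
      fromBlocks (Ring.inverse A) (-(Ring.inverse A * B * Ring.inverse D)) 0 (Ring.inverse D) := by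
  have hright : fromBlocks A B 0 D *
      fromBlocks (Ring.inverse A) (-(Ring.inverse A * B * Ring.inverse D)) 0 (Ring.inverse D) =
        1 := by
    simp [fromBlocks_multiply, ← Matrix.mul_assoc, Ring.mul_inverse_cancel _ hA,
      Ring.mul_inverse_cancel _ hD, fromBlocks_one]
  have hleft : fromBlocks (Ring.inverse A) (-(Ring.inverse A * B * Ring.inverse D)) 0
      (Ring.inverse D) * fromBlocks A B 0 D = 1 := by
    simp [fromBlocks_multiply, Matrix.mul_assoc, Ring.inverse_mul_cancel _ hA,
      Ring.inverse_mul_cancel _ hD, fromBlocks_one]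
  exact Ring.inverse_unit ⟨_, _, hright, hleft⟩

end BlockInverse

namespace MvPowerSeries

variable {A : Type*} [Ring A] {σ n : Type*} [Fintype n] [DecidableEq n]

noncomputable def toMatrix (f : MvPowerSeries σ (Matrix n n A)) :
    Matrix n n (MvPowerSeries σ A) :=
  Matrix.of fun i j => (fun d => coeff d f i j : MvPowerSeries σ A)

@[simp]
theorem coeff_toMatrix (f : MvPowerSeries σ (Matrix n n A)) (i j : n) (d : σ →₀ ℕ) :
    coeff d (toMatrix f i j) = coeff d f i j :=
  rfl

noncomputable def toMatrixRingHom :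
    MvPowerSeries σ (Matrix n n A) →+* Matrix n n (MvPowerSeries σ A) where
  toFun := toMatrix
  map_one' := by
    classical
    ext i j d
    by_cases hij : i = j <;> by_cases hd : d = 0 <;>
      simp [hij, hd, Matrix.one_apply, coeff_one]
  map_mul' f g := by
    classical
    ext i j d
    simp only [coeff_toMatrix, coeff_mul, Matrix.mul_apply, map_sum, Matrix.sum_apply]
    exact Finset.sum_comm
  map_zero' := rfl
  map_add' _ _ := rfl

theorem _root_.Matrix.isUnit_of_isUnit_map_constantCoeff {M : Matrix n n (MvPowerSeries σ A)}
    (h : IsUnit (M.map constantCoeff)) : IsUnit M := by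
  let f : MvPowerSeries σ (Matrix n n A) := fun d => M.map (coeff d)
  have hf : IsUnit f := isUnit_iff_constantCoeff.mpr h
  exact hf.map toMatrixRingHom

end MvPowerSeries

section PowerSeriesPencil

variable {A : Type*} [Ring A] {m : ℕ}

theorem matC_mul {κ ι τ : Type*} [Fintype ι] (M : Matrix κ ι A) (N : Matrix ι τ A) :
    matC m (M * N) = matC m M * matC m N :=
  Matrix.map_mul

theorem matC_fromCols {κ ι₁ ι₂ : Type*} (M₁ : Matrix κ ι₁ A) (M₂ : Matrix κ ι₂ A) :
    matC m (fromCols M₁ M₂) = fromCols (matC m M₁) (matC m M₂) :=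
  fromCols_map M₁ M₂ _

theorem sum_xMul_mul {κ ι τ : Type*} [Fintype ι] (B : Fin m → Matrix κ ι A) (M : Matrix ι τ A) :
    ∑ k, xMul k (B k * M) = (∑ k, xMul k (B k)) * matC m M := by
  simp only [Matrix.sum_mul, xMul, matC_mul, Matrix.smul_mul]

theorem sum_xMul_fromRows {κ₁ κ₂ ι : Type*} (P : Fin m → Matrix κ₁ ι A)
    (Q : Fin m → Matrix κ₂ ι A) :
    ∑ k, xMul k (fromRows (P k) (Q k)) = fromRows (∑ k, xMul k (P k)) (∑ k, xMul k (Q k)) := by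
  ext (i | i) j <;> simp [xMul, matC, Matrix.sum_apply]

theorem one_sub_sum_xMul_fromBlocks {κ₁ κ₂ : Type*} [DecidableEq κ₁] [DecidableEq κ₂]
    (P : Fin m → Matrix κ₁ κ₁ A) (Q : Fin m → Matrix κ₁ κ₂ A) (S : Fin m → Matrix κ₂ κ₂ A) :
    1 - ∑ k, xMul k (fromBlocks (P k) (Q k) 0 (S k)) =
      fromBlocks (1 - ∑ k, xMul k (P k)) (-∑ k, xMul k (Q k)) 0 (1 - ∑ k, xMul k (S k)) := by
  ext (i | i) (j | j) <;> simp [xMul, matC, Matrix.sum_apply, Matrix.one_apply]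

theorem isUnit_one_sub_sum_xMul {κ : Type*} [Fintype κ] [DecidableEq κ]
    (P : Fin m → Matrix κ κ A) :
    IsUnit ((1 : Matrix κ κ (MvPowerSeries (Fin m) A)) - ∑ k, xMul k (P k)) := by
  apply isUnit_of_isUnit_map_constantCoeff
  convert isUnit_one (M := Matrix κ κ A)
  ext i j
  by_cases hij : i = j <;> simp [hij, xMul, matC, Matrix.sum_apply, Matrix.one_apply]

end PowerSeriesPencil

section Transfer

variable {S : Type*} [Ring S] {n p q : Type*} [Fintype n] [DecidableEq n]

noncomputable def Matrix.transfer (F : Matrix n n S) (G : Matrix n q S) (C : Matrix p n S)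
    (D : Matrix p q S) : Matrix p q S :=
  D + C * Ring.inverse F * G

theorem Matrix.transfer_mul_transfer {n₁ n₂ r : Type*} [Fintype n₁] [Fintype n₂]
    [DecidableEq n₁] [DecidableEq n₂] [Fintype q]
    {F₁ : Matrix n₁ n₁ S} (G₁ : Matrix n₁ q S) (C₁ : Matrix p n₁ S) (D₁ : Matrix p q S)
    {F₂ : Matrix n₂ n₂ S} (G₂ : Matrix n₂ r S) (C₂ : Matrix q n₂ S) (D₂ : Matrix q r S)
    (hF₁ : IsUnit F₁) (hF₂ : IsUnit F₂) :
    transfer F₁ G₁ C₁ D₁ * transfer F₂ G₂ C₂ D₂ =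
      transfer (fromBlocks F₁ (-(G₁ * C₂)) 0 F₂) (fromRows (G₁ * D₂) G₂) (fromCols C₁ (D₁ * C₂))
        (D₁ * D₂) := by
  simp only [transfer, ringInverse_fromBlocks_zero₂₁ _ hF₁ hF₂, fromCols_mul_fromBlocks,
    fromCols_mul_fromRows, Matrix.mul_add, Matrix.add_mul, Matrix.mul_neg, Matrix.neg_mul,
    neg_neg, Matrix.mul_zero, add_zero, Matrix.mul_assoc]
  abel

end Transfer

theorem realization_eq_transfer {A : Type*} [Ring A] {m : ℕ} {N p q : Type*} [Fintype N]
    [DecidableEq N] (Ak : Fin m → Matrix N N A) (Bk : Fin m → Matrix N q A) (C : Matrix p N A)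
    (D : Matrix p q A) :
    realization m Ak Bk C D =
      transfer (1 - ∑ k, xMul k (Ak k)) (∑ k, xMul k (Bk k)) (matC m C) (matC m D) :=
  rfl

/-- A realization of the product `R₁ R₂` of two realizations, via block matrices:
`A_k = [[A₁ₖ, B₁ₖ C₂], [0, A₂ₖ]]`, `B_k = [B₁ₖ D₂; B₂ₖ]`, `C = [C₁, D₁ C₂]`,
`D = D₁ D₂`. -/
theorem stmt11 {A : Type*} [Ring A] {m N₁ N₂ p q r : ℕ}
    (A1 : Fin m → Matrix (Fin N₁) (Fin N₁) A) (B1 : Fin m → Matrix (Fin N₁) (Fin q) A)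
    (C1 : Matrix (Fin p) (Fin N₁) A) (D1 : Matrix (Fin p) (Fin q) A)
    (A2 : Fin m → Matrix (Fin N₂) (Fin N₂) A) (B2 : Fin m → Matrix (Fin N₂) (Fin r) A)
    (C2 : Matrix (Fin q) (Fin N₂) A) (D2 : Matrix (Fin q) (Fin r) A) :
    realization m A1 B1 C1 D1 * realization m A2 B2 C2 D2 =
      realization m
        (fun k => Matrix.fromBlocks (A1 k) (B1 k * C2) 0 (A2 k))
        (fun k => Matrix.fromRows (B1 k * D2) (B2 k))
        (Matrix.fromCols C1 (D1 * C2))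
        (D1 * D2) := by
  rw [realization_eq_transfer, realization_eq_transfer,
    transfer_mul_transfer _ _ _ _ _ _ (isUnit_one_sub_sum_xMul A1) (isUnit_one_sub_sum_xMul A2),
    realization_eq_transfer, one_sub_sum_xMul_fromBlocks, sum_xMul_fromRows, sum_xMul_mul,
    sum_xMul_mul, matC_fromCols, matC_mul, matC_mul]
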